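/- arXiv:2304.12365 — 3 statements merged into one kernel-verified Lean document; each statement's English description precedes it below -/
import Mathlib

section
/- Let p ∈ (0,1) and define χ(q) = -(qp + 1 - q)·log(qp + 1 - q) + qp·log(qp) - q·log(q) for q ∈ (0,1). Then χ is maximized at q* = 1/(1 - p + p^{p/(p-1)}), and the maximum value is χ(q*) = log(1 + (1-p)·p^{p/(1-p)}); equivalently, writing p = 1/(1+n) with n > 0, q* = (1+n)/(n + (1+n)^{(1+n)/n}) and χ(q*) = log(1 + n/(1+n)^{(1+n)/n}). -/
open Real Set

private noncomputable def chiF (p q : ℝ) : ℝ :=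
  -((q * p + 1 - q) * Real.logb 2 (q * p + 1 - q))
    + q * p * Real.logb 2 (q * p) - q * Real.logb 2 q

private noncomputable def DF (p q : ℝ) : ℝ :=
  ((p - 1) * (Real.log q - Real.log (q * p + 1 - q)) + p * Real.log p) / Real.log 2

private lemma Xpos {p q : ℝ} (hp : p ∈ Ioo (0:ℝ) 1) (hq : q ∈ Ioo (0:ℝ) 1) :
    0 < q * p + 1 - q := by nlinarith [mul_pos hq.1 hp.1, hq.2]

private lemma chi_hasDeriv {p q : ℝ} (hp : p ∈ Ioo (0:ℝ) 1) (hq : q ∈ Ioo (0:ℝ) 1) :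
    HasDerivAt (chiF p) (DF p q) q := by
  have hX := Xpos hp hq
  have hqp : 0 < q * p := mul_pos hq.1 hp.1
  have hx : HasDerivAt (fun q : ℝ => q * p + 1 - q) (p - 1) q := by
    exact ((((hasDerivAt_id q).mul_const p).add_const 1).sub (hasDerivAt_id q)).congr_deriv (by ring)
  have h1 : HasDerivAt (fun q : ℝ => (q * p + 1 - q) * Real.log (q * p + 1 - q))
      ((Real.log (q * p + 1 - q) + 1) * (p - 1)) q := by
    have := HasDerivAt.comp (h := fun q : ℝ => q * p + 1 - q) q (Real.hasDerivAt_mul_log hX.ne') hx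
    exact this
  have hqp' : HasDerivAt (fun q : ℝ => q * p) p q := by
    simpa using (hasDerivAt_id q).mul_const p
  have h2 : HasDerivAt (fun q : ℝ => q * p * Real.log (q * p)) ((Real.log (q * p) + 1) * p) q :=
    by have := (Real.hasDerivAt_mul_log hqp.ne').comp q hqp'; exact this
  have h3 : HasDerivAt (fun q : ℝ => q * Real.log q) (Real.log q + 1) q :=
    Real.hasDerivAt_mul_log hq.1.ne'
  have hG : HasDerivAt (fun q : ℝ => -((q * p + 1 - q) * Real.log (q * p + 1 - q))
      + q * p * Real.log (q * p) - q * Real.log q)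
      (-((Real.log (q * p + 1 - q) + 1) * (p - 1)) + (Real.log (q * p) + 1) * p
        - (Real.log q + 1)) q :=
    ((h1.neg).add h2).sub h3
  have key : -((Real.log (q * p + 1 - q) + 1) * (p - 1)) + (Real.log (q * p) + 1) * p
      - (Real.log q + 1)
      = (p - 1) * (Real.log q - Real.log (q * p + 1 - q)) + p * Real.log p := by
    rw [Real.log_mul hq.1.ne' hp.1.ne']; ring
  have hfin := hG.div_const (Real.log 2)
  rw [key] at hfin
  have hfun : chiF p = fun q : ℝ => (-((q * p + 1 - q) * Real.log (q * p + 1 - q))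
      + q * p * Real.log (q * p) - q * Real.log q) / Real.log 2 := by
    funext x; simp only [chiF, Real.logb]; ring
  rw [hfun]
  exact hfin

private lemma DF_anti {p : ℝ} (hp : p ∈ Ioo (0:ℝ) 1) {u v : ℝ}
    (hu : u ∈ Ioo (0:ℝ) 1) (hv : v ∈ Ioo (0:ℝ) 1) (huv : u < v) : DF p v < DF p u := by
  have hXu := Xpos hp hu
  have hXv := Xpos hp hv
  have h2 : (0:ℝ) < Real.log 2 := Real.log_pos one_lt_two
  have key : Real.log u - Real.log (u * p + 1 - u) < Real.log v - Real.log (v * p + 1 - v) := by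
    have hm : u * (v * p + 1 - v) < v * (u * p + 1 - u) := by nlinarith
    have hl := Real.log_lt_log (mul_pos hu.1 hXv) hm
    rw [Real.log_mul hu.1.ne' hXv.ne', Real.log_mul hv.1.ne' hXu.ne'] at hl
    linarith
  have h3 : (p - 1) * (Real.log v - Real.log (v * p + 1 - v))
      < (p - 1) * (Real.log u - Real.log (u * p + 1 - u)) := by
    have hneg : p - 1 < 0 := by linarith [hp.2]
    nlinarith
  unfold DF
  apply div_lt_div_of_pos_right ?_ h2
  linarith

private lemma qstar_mem {p : ℝ} (hp : p ∈ Ioo (0:ℝ) 1) :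
    1 / (1 - p + p ^ (p / (p - 1))) ∈ Ioo (0:ℝ) 1 := by
  have ha : (0:ℝ) < p ^ (p / (p - 1)) := Real.rpow_pos_of_pos hp.1 _
  have hs : (0:ℝ) < 1 - p + p ^ (p / (p - 1)) := by nlinarith [hp.2]
  have hlt : p / (p - 1) < 1 := lt_trans (div_neg_of_pos_of_neg hp.1 (by linarith [hp.2])) one_pos
  have hpa : p < p ^ (p / (p - 1)) := by
    have := Real.rpow_lt_rpow_of_exponent_gt hp.1 hp.2 hlt
    rwa [Real.rpow_one] at this
  exact ⟨by positivity, (div_lt_one hs).mpr (by linarith)⟩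

private lemma DF_qstar {p : ℝ} (hp : p ∈ Ioo (0:ℝ) 1) :
    DF p (1 / (1 - p + p ^ (p / (p - 1)))) = 0 := by
  have h2 : p - 1 ≠ 0 := by intro h; linarith [hp.2, h]
  have ha : (0:ℝ) < p ^ (p / (p - 1)) := Real.rpow_pos_of_pos hp.1 _
  have hs : (0:ℝ) < 1 - p + p ^ (p / (p - 1)) := by nlinarith [hp.2]
  have hX : (1 / (1 - p + p ^ (p / (p - 1)))) * p + 1 - 1 / (1 - p + p ^ (p / (p - 1)))
      = p ^ (p / (p - 1)) / (1 - p + p ^ (p / (p - 1))) := by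
    field_simp; ring
  unfold DF
  rw [hX, Real.log_div ha.ne' hs.ne', show (1:ℝ) / (1 - p + p ^ (p / (p - 1)))
      = (1 - p + p ^ (p / (p - 1)))⁻¹ from one_div _, Real.log_inv, Real.log_rpow hp.1]
  rw [div_eq_zero_iff]; left
  field_simp
  ring

private lemma chi_val {p : ℝ} (hp : p ∈ Ioo (0:ℝ) 1) :
    chiF p (1 / (1 - p + p ^ (p / (p - 1))))
      = Real.logb 2 (1 + (1 - p) * p ^ (p / (1 - p))) := by
  have h2 : p - 1 ≠ 0 := by intro h; linarith [hp.2, h]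
  have ha : (0:ℝ) < p ^ (p / (p - 1)) := Real.rpow_pos_of_pos hp.1 _
  have hs : (0:ℝ) < 1 - p + p ^ (p / (p - 1)) := by nlinarith [hp.2]
  have hb : p ^ (p / (1 - p)) = (p ^ (p / (p - 1)))⁻¹ := by
    rw [show p / (1 - p) = -(p / (p - 1)) by
      rw [show (1:ℝ) - p = -(p - 1) by ring, div_neg], Real.rpow_neg hp.1.le]
  have hX : (1 / (1 - p + p ^ (p / (p - 1)))) * p + 1 - 1 / (1 - p + p ^ (p / (p - 1)))
      = p ^ (p / (p - 1)) / (1 - p + p ^ (p / (p - 1))) := by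
    field_simp; ring
  have hQ : (1 / (1 - p + p ^ (p / (p - 1)))) * p = p / (1 - p + p ^ (p / (p - 1))) := by ring
  have hR : 1 + (1 - p) * (p ^ (p / (p - 1)))⁻¹
      = (1 - p + p ^ (p / (p - 1))) / p ^ (p / (p - 1)) := by
    field_simp; ring
  have hla : Real.logb 2 (p ^ (p / (p - 1))) = (p / (p - 1)) * Real.logb 2 p := by
    simp only [Real.logb, Real.log_rpow hp.1]; ring
  unfold chiF
  rw [hX, hQ, hb, hR, Real.logb_div ha.ne' hs.ne', Real.logb_div hp.1.ne' hs.ne',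
    show (1:ℝ) / (1 - p + p ^ (p / (p - 1))) = (1 - p + p ^ (p / (p - 1)))⁻¹ from one_div _,
    Real.logb_inv, Real.logb_div hs.ne' ha.ne', hla]
  field_simp
  ring

private lemma chi_le {p : ℝ} (hp : p ∈ Ioo (0:ℝ) 1) {q : ℝ} (hq : q ∈ Ioo (0:ℝ) 1) :
    chiF p q ≤ chiF p (1 / (1 - p + p ^ (p / (p - 1)))) := by
  have hQm : 1 / (1 - p + p ^ (p / (p - 1))) ∈ Ioo (0:ℝ) 1 := qstar_mem hp
  set Q := 1 / (1 - p + p ^ (p / (p - 1))) with hQdef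
  have hDQ : DF p Q = 0 := DF_qstar hp
  rcases lt_trichotomy q Q with h | h | h
  · have hmono : StrictMonoOn (chiF p) (Icc q Q) := by
      refine strictMonoOn_of_deriv_pos (convex_Icc q Q) (fun x hx => ?_) (fun x hx => ?_)
      · have hx' : x ∈ Ioo (0:ℝ) 1 := ⟨lt_of_lt_of_le hq.1 hx.1, lt_of_le_of_lt hx.2 hQm.2⟩
        exact (chi_hasDeriv hp hx').continuousAt.continuousWithinAt
      · rw [interior_Icc] at hx
        have hx' : x ∈ Ioo (0:ℝ) 1 := ⟨lt_trans hq.1 hx.1, lt_trans hx.2 hQm.2⟩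
        rw [(chi_hasDeriv hp hx').deriv]
        have hd := DF_anti hp hx' hQm hx.2
        linarith [hDQ]
    exact (hmono (left_mem_Icc.mpr h.le) (right_mem_Icc.mpr h.le) h).le
  · rw [h]
  · have hanti : StrictAntiOn (chiF p) (Icc Q q) := by
      refine strictAntiOn_of_deriv_neg (convex_Icc Q q) (fun x hx => ?_) (fun x hx => ?_)
      · have hx' : x ∈ Ioo (0:ℝ) 1 := ⟨lt_of_lt_of_le hQm.1 hx.1, lt_of_le_of_lt hx.2 hq.2⟩
        exact (chi_hasDeriv hp hx').continuousAt.continuousWithinAt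
      · rw [interior_Icc] at hx
        have hx' : x ∈ Ioo (0:ℝ) 1 := ⟨lt_trans hQm.1 hx.1, lt_trans hx.2 hq.2⟩
        rw [(chi_hasDeriv hp hx').deriv]
        have hd := DF_anti hp hQm hx' hx.1
        linarith [hDQ]
    exact (hanti (left_mem_Icc.mpr h.le) (right_mem_Icc.mpr h.le) h).le

/-- Two-codeword Holevo information: for `p ∈ (0,1)` and
`χ(q) = -(qp+1-q)log₂(qp+1-q) + qp·log₂(qp) - q·log₂ q` on `(0,1)`,
`χ` is maximized at `q* = 1/(1-p+p^{p/(p-1)})`, with maximum value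
`χ(q*) = log₂(1 + (1-p)·p^{p/(1-p)})`. -/
theorem two_codeword_holevo_optimum (p : ℝ) (hp : p ∈ Set.Ioo (0 : ℝ) 1) :
    let chi : ℝ → ℝ := fun q =>
      -((q * p + 1 - q) * Real.logb 2 (q * p + 1 - q))
        + q * p * Real.logb 2 (q * p) - q * Real.logb 2 q
    let qstar : ℝ := 1 / (1 - p + p ^ (p / (p - 1)))
    (qstar ∈ Set.Ioo (0 : ℝ) 1) ∧
    (∀ q ∈ Set.Ioo (0 : ℝ) 1, chi q ≤ chi qstar) ∧
    chi qstar = Real.logb 2 (1 + (1 - p) * p ^ (p / (1 - p))) := by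
  intro chi qstar
  have hchi : chi = chiF p := rfl
  refine ⟨qstar_mem hp, fun q hq => ?_, ?_⟩
  · rw [hchi]; exact chi_le hp hq
  · rw [hchi]; exact chi_val hp
end

section
/- Let ρ_max be the density operator diagonal in the Fock basis with eigenvalues given by the Poisson distribution with mean E = |α|². The equation (∂/∂ε) S(ε ρ_0 + (1-ε) ρ_max)|_{ε=0} = 0, where ρ_0 = |0⟩⟨0| is the vacuum and S is von Neumann entropy in bits, is equivalent to the condition S(ρ_max) = E/ln 2. Concretely, in terms of the Poisson distribution this reads: H(Poi(E)) = E/ln 2, where H is Shannon entropy in bits. -/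
/-!
Write `η = negMulLog`. Since `η (c * x) = x * η c + c * η x`, the entropy of `(1 - ε) • p` is
`η (1 - ε) + (1 - ε) * H(p)`, and mixing in the vacuum with weight `ε` changes only the vacuum
term. So the entropy of the mixture is explicit in `ε`, with derivative `-log p₀ - H(p)` at
`ε = 0`. For the Poisson weights `log p₀ = -E`, so stationarity means `H(p) = E` in nats.
-/

open Real

section MixtureEntropy

variable {ι : Type*}

theorem neg_tsum_mul_logb (b : ℝ) (f : ι → ℝ) :
    -∑' i, f i * logb b (f i) = (∑' i, negMulLog (f i)) / log b := by
  rw [← tsum_div_const, ← tsum_neg]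
  refine tsum_congr fun i => ?_
  simp only [negMulLog, logb]
  ring

theorem tsum_negMulLog_const_mul {p : ι → ℝ} (hp : HasSum p 1)
    (hη : Summable fun i => negMulLog (p i)) (c : ℝ) :
    ∑' i, negMulLog (c * p i) = negMulLog c + c * ∑' i, negMulLog (p i) := by
  simp only [negMulLog_mul]
  rw [(hp.summable.mul_right _).tsum_add (hη.mul_left c), tsum_mul_right, tsum_mul_left,
    hp.tsum_eq, one_mul]

variable [DecidableEq ι]

theorem tsum_negMulLog_mixture {p : ι → ℝ} (hp : HasSum p 1)
    (hη : Summable fun i => negMulLog (p i)) (i₀ : ι) (ε : ℝ) :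
    ∑' i, negMulLog (ε * (if i = i₀ then 1 else 0) + (1 - ε) * p i) =
      negMulLog (1 - ε) + (1 - ε) * ∑' i, negMulLog (p i)
        + (negMulLog (ε + (1 - ε) * p i₀) - negMulLog ((1 - ε) * p i₀)) := by
  have hsplit : (fun i => negMulLog (ε * (if i = i₀ then 1 else 0) + (1 - ε) * p i)) =
      fun i => negMulLog ((1 - ε) * p i) +
        if i = i₀ then negMulLog (ε + (1 - ε) * p i₀) - negMulLog ((1 - ε) * p i₀) else 0 := by
    funext i
    by_cases hi : i = i₀
    · subst hi; simp
    · simp [hi]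
  have hsummable : Summable fun i => negMulLog ((1 - ε) * p i) := by
    simp only [negMulLog_mul]
    exact (hp.summable.mul_right _).add (hη.mul_left _)
  rw [hsplit, hsummable.tsum_add (summable_of_ne_finset_zero (s := {i₀}) (by simp_all)),
    tsum_ite_eq, tsum_negMulLog_const_mul hp hη]

theorem hasDerivAt_tsum_negMulLog_mixture {p : ι → ℝ} (hp : HasSum p 1)
    (hη : Summable fun i => negMulLog (p i)) {i₀ : ι} (hp₀ : p i₀ ≠ 0) :
    HasDerivAt (fun ε => ∑' i, negMulLog (ε * (if i = i₀ then 1 else 0) + (1 - ε) * p i))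
      (-log (p i₀) - ∑' i, negMulLog (p i)) 0 := by
  simp_rw [tsum_negMulLog_mixture hp hη i₀]
  have hsub : HasDerivAt (fun ε : ℝ => 1 - ε) (-1) 0 := by
    simpa using (hasDerivAt_id' (x := (0 : ℝ))).const_sub 1
  have hvac : HasDerivAt (fun ε : ℝ => ε + (1 - ε) * p i₀) (1 - p i₀) 0 := by
    simpa [sub_eq_add_neg] using (hasDerivAt_id' (x := (0 : ℝ))).fun_add (hsub.mul_const (p i₀))
  have h₁ : HasDerivAt (fun ε => negMulLog (1 - ε)) ((-log 1 - 1) * -1) 0 :=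
    (hasDerivAt_negMulLog one_ne_zero).comp_of_eq (0 : ℝ) hsub (by simp)
  have h₂ : HasDerivAt (fun ε => negMulLog (ε + (1 - ε) * p i₀))
      ((-log (p i₀) - 1) * (1 - p i₀)) 0 :=
    (hasDerivAt_negMulLog hp₀).comp_of_eq (0 : ℝ) hvac (by simp)
  have h₃ : HasDerivAt (fun ε => negMulLog ((1 - ε) * p i₀)) ((-log (p i₀) - 1) * -p i₀) 0 :=
    (hasDerivAt_negMulLog hp₀).comp_of_eq (0 : ℝ) (by simpa using hsub.mul_const (p i₀)) (by simp)
  refine ((h₁.fun_add (hsub.mul_const _)).fun_add (h₂.fun_sub h₃)).congr_deriv ?_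
  rw [log_one]
  ring

end MixtureEntropy

theorem log_poisson {E : ℝ} (hE : 0 < E) (n : ℕ) :
    log (exp (-E) * E ^ n / n.factorial) = -E + n * log E - log n.factorial := by
  rw [log_div (by positivity) (by positivity), log_mul (by positivity) (by positivity),
    log_exp, log_pow]

theorem log_factorial_le_sq (n : ℕ) : log n.factorial ≤ (n : ℝ) ^ 2 :=
  calc log n.factorial ≤ log ((n : ℝ) ^ n) :=
        log_le_log (by positivity) (by exact_mod_cast Nat.factorial_le_pow n)
    _ = n * log n := log_pow n n
    _ ≤ n * n := by gcongr; exact log_le_self n.cast_nonneg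
    _ = (n : ℝ) ^ 2 := (sq _).symm

theorem add_one_sq_le_four_pow (n : ℕ) : ((n : ℝ) + 1) ^ 2 ≤ 4 ^ n := by
  have h : (n : ℝ) + 1 ≤ 2 ^ n := by exact_mod_cast Nat.lt_two_pow_self
  calc ((n : ℝ) + 1) ^ 2 ≤ (2 ^ n) ^ 2 := by gcongr
    _ = 4 ^ n := by rw [← pow_mul, mul_comm, pow_mul]; norm_num

theorem abs_log_poisson_le {E : ℝ} (hE : 0 < E) (n : ℕ) :
    |log (exp (-E) * E ^ n / n.factorial)| ≤ (E + |log E| + 1) * 4 ^ n := by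
  have hfac : 0 ≤ log n.factorial := log_natCast_nonneg _
  have hn : (0 : ℝ) ≤ n := n.cast_nonneg
  calc |log (exp (-E) * E ^ n / n.factorial)|
      ≤ E + n * |log E| + (n : ℝ) ^ 2 := by
        rw [log_poisson hE, abs_le]
        have := log_factorial_le_sq n
        constructor <;> nlinarith [neg_abs_le (log E), le_abs_self (log E)]
    _ ≤ (E + |log E| + 1) * ((n : ℝ) + 1) ^ 2 := by nlinarith [abs_nonneg (log E)]
    _ ≤ (E + |log E| + 1) * 4 ^ n := by gcongr; exact add_one_sq_le_four_pow n

theorem summable_negMulLog_poisson {E : ℝ} (hE : 0 < E) :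
    Summable fun n : ℕ => negMulLog (exp (-E) * E ^ n / n.factorial) := by
  refine .of_norm_bounded
    (((summable_pow_div_factorial (4 * E)).mul_left (exp (-E) * (E + |log E| + 1)))) fun n => ?_
  have hp : 0 < exp (-E) * E ^ n / n.factorial := by positivity
  calc ‖negMulLog (exp (-E) * E ^ n / n.factorial)‖
      = exp (-E) * E ^ n / n.factorial * |log (exp (-E) * E ^ n / n.factorial)| := by
        rw [negMulLog, norm_mul, norm_neg, norm_of_nonneg hp.le, norm_eq_abs]
    _ ≤ exp (-E) * E ^ n / n.factorial * ((E + |log E| + 1) * 4 ^ n) := by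
        gcongr; exact abs_log_poisson_le hE n
    _ = exp (-E) * (E + |log E| + 1) * ((4 * E) ^ n / n.factorial) := by ring

/-- For the ring state `ρ_max` (diagonal in the Fock basis with Poisson
eigenvalues of mean `E`) and the vacuum `ρ₀`, the stationarity condition
`(∂/∂ε) S(ε ρ₀ + (1-ε) ρ_max)|_{ε=0} = 0` is equivalent to
`S(ρ_max) = E/ln 2`, i.e. `H(Poi(E)) = E / ln 2` (entropies in bits). -/
theorem one_ring_threshold_condition (E : ℝ) (hE : 0 < E) :
    let p : ℕ → ℝ := fun n => Real.exp (-E) * E ^ n / n.factorial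
    let q : ℝ → ℕ → ℝ := fun ε n => ε * (if n = 0 then 1 else 0) + (1 - ε) * p n
    let S : ℝ → ℝ := fun ε => -∑' n : ℕ, q ε n * Real.logb 2 (q ε n)
    (HasDerivAt S 0 0 ↔ (-∑' n : ℕ, p n * Real.logb 2 (p n)) = E / Real.log 2) := by
  intro p q S
  have hp : HasSum p 1 := ProbabilityTheory.hasSum_one_poissonMeasure ⟨E, hE.le⟩
  have hη : Summable fun n => negMulLog (p n) := summable_negMulLog_poisson hE
  have hp₀ : log (p 0) = -E := by simp [p]
  have hlog2 : log 2 ≠ 0 := (log_pos one_lt_two).ne'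
  have hS : HasDerivAt S ((E - ∑' n, negMulLog (p n)) / log 2) 0 := by
    simp only [S, neg_tsum_mul_logb]
    have := (hasDerivAt_tsum_negMulLog_mixture hp hη (i₀ := 0) (by positivity)).div_const (log 2)
    rwa [hp₀, neg_neg] at this
  rw [neg_tsum_mul_logb, div_left_inj' hlog2]
  constructor
  · intro h
    have hzero := (h.unique hS).symm
    rw [div_eq_zero_iff, sub_eq_zero] at hzero
    exact (hzero.resolve_right hlog2).symm
  · intro h
    rwa [h, sub_self, zero_div] at hS
end

section
/- The function f(z) = ∑_{n=0}^∞ e^{-z} z^n/n! · log(n!) (i.e. E[log N!] for N Poisson with complex parameter z) defines an analytic function on the region C_δ = {z ∈ ℂ : Re(z) > δ, |Im(z)| < δ} for every δ > 0; in particular, z ↦ E_{Poi(z)}[log N!] is real-analytic on (0, ∞). -/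
/-!
Since `log₂ n! ≤ n² ≤ 4ⁿ`, the coefficients of `∑ₙ (log₂ n!/n!) zⁿ` are dominated by those of
`exp (4z)`, so this power series has infinite radius of convergence. The Poisson expectation is
`e^{-z}` times it, hence an entire function, over `ℂ` as well as over `ℝ`.
-/

open Nat FormalMultilinearSeries
open scoped NNReal

theorem logb_two_factorial_le_four_pow (n : ℕ) : Real.logb 2 n ! ≤ 4 ^ n := by
  have hfac : n ! ≤ 2 ^ (n * n) :=
    calc n ! ≤ n ^ n := factorial_le_pow n
      _ ≤ (2 ^ n) ^ n := Nat.pow_le_pow_left n.lt_two_pow_self.le n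
      _ = 2 ^ (n * n) := (pow_mul 2 n n).symm
  have hsq : ((n * n : ℕ) : ℝ) ≤ 4 ^ n := by
    have := Nat.mul_le_mul n.lt_two_pow_self.le n.lt_two_pow_self.le
    rw [← mul_pow] at this
    exact_mod_cast this
  calc Real.logb 2 n ! ≤ Real.logb 2 ((2 : ℝ) ^ (n * n)) :=
        Real.logb_le_logb_of_le one_lt_two (by positivity) (by exact_mod_cast hfac)
    _ = ((n * n : ℕ) : ℝ) := by simp [Real.logb_pow]
    _ ≤ 4 ^ n := hsq

theorem analyticOnNhd_ofScalarsSum_of_summable_norm {𝕜 E : Type*} [NontriviallyNormedField 𝕜] [NormedRing E]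
    [NormedAlgebra 𝕜 E] [NormOneClass E] [CompleteSpace E] {c : ℕ → 𝕜}
    (hc : ∀ r : ℝ≥0, Summable fun n => ‖c n‖ * (r : ℝ) ^ n) :
    AnalyticOnNhd 𝕜 (ofScalarsSum (E := E) c) Set.univ := by
  have hrad : (ofScalars E c).radius = ⊤ :=
    radius_eq_top_of_summable_norm _ fun r => by simpa only [ofScalars_norm] using hc r
  intro z _
  exact ((ofScalars E c).hasFPowerSeriesOnBall (by simp [hrad])).analyticAt_of_mem
    (by simp [hrad])

theorem summable_norm_logb_factorial_div_factorial_mul_pow {𝕜 : Type*} [RCLike 𝕜] (r : ℝ≥0) :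
    Summable fun n : ℕ => ‖(Real.logb 2 n ! : 𝕜) / (n ! : 𝕜)‖ * (r : ℝ) ^ n := by
  refine Summable.of_nonneg_of_le (fun n => by positivity) (fun n => ?_)
    (Real.summable_pow_div_factorial (4 * r))
  have hlog : 0 ≤ Real.logb 2 n ! :=
    Real.logb_nonneg one_lt_two (by exact_mod_cast n.factorial_pos)
  rw [norm_div, RCLike.norm_ofReal, RCLike.norm_natCast, abs_of_nonneg hlog, mul_pow,
    div_mul_eq_mul_div]
  gcongr
  exact logb_two_factorial_le_four_pow n

theorem analyticOnNhd_tsum_pow_div_factorial_mul_logb {𝕜 : Type*} [RCLike 𝕜] :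
    AnalyticOnNhd 𝕜 (fun z : 𝕜 => ∑' n : ℕ, z ^ n / n ! * (Real.logb 2 n ! : 𝕜)) Set.univ := by
  have hsum : (fun z : 𝕜 => ∑' n : ℕ, z ^ n / n ! * (Real.logb 2 n ! : 𝕜)) =
      ofScalarsSum (E := 𝕜) fun n => (Real.logb 2 n ! : 𝕜) / (n ! : 𝕜) := by
    ext z
    rw [ofScalars_sum_eq]
    exact tsum_congr fun n => by rw [smul_eq_mul]; ring
  rw [hsum]
  exact analyticOnNhd_ofScalarsSum_of_summable_norm summable_norm_logb_factorial_div_factorial_mul_pow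

/-- The function `z ↦ E_{Poi(z)}[log₂ N!] = ∑ₙ e^{-z} zⁿ/n! · log₂ n!` is
analytic on `C_δ = {z : Re z > δ, |Im z| < δ}` for every `δ > 0`; in
particular its real restriction is real-analytic on `(0, ∞)`. -/
theorem poisson_log_factorial_analytic :
    (∀ δ : ℝ, 0 < δ →
      AnalyticOnNhd ℂ
        (fun z : ℂ => ∑' n : ℕ,
          Complex.exp (-z) * z ^ n / n.factorial * (Real.logb 2 n.factorial : ℂ))
        {z : ℂ | δ < z.re ∧ |z.im| < δ}) ∧
    AnalyticOnNhd ℝ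
      (fun x : ℝ => ∑' n : ℕ,
        Real.exp (-x) * x ^ n / n.factorial * Real.logb 2 n.factorial)
      (Set.Ioi 0) := by
  simp_rw [mul_div_assoc, mul_assoc, tsum_mul_left]
  refine ⟨fun δ _ z _ => ?_, fun x _ => ?_⟩
  · exact analyticAt_id.neg.cexp.mul (analyticOnNhd_tsum_pow_div_factorial_mul_logb z trivial)
  · exact analyticAt_id.neg.rexp.mul (analyticOnNhd_tsum_pow_div_factorial_mul_logb x trivial)
end
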